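/- Let B = A_1 × ⋯ × A_n be a direct product of commutative rings with unity, and let (a_1, …, a_n) be a nonzero non-unit F-irreducible element of B. Then there exists an index i such that a_i is F-irreducible in A_i and a_j is a unit in A_j for all j ≠ i. -/

import Mathlib

/-- `r` is a zero divisor. -/
def IsZD {R : Type*} [CommRing R] (r : R) : Prop := ∃ s : R, s ≠ 0 ∧ r * s = 0

/-- `R` has only harmless zero divisors: every zero divisor is `1 - u` for a unit `u`. -/
def OnlyHarmlessZD (R : Type*) [CommRing R] : Prop :=
  ∀ r : R, IsZD r → ∃ u : Rˣ, r = 1 - (u : R)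

/-- `r` is irreducible in the classical (Galovich) sense. -/
def Irr {R : Type*} [CommRing R] (r : R) : Prop :=
  ∀ a b : R, r = a * b → IsUnit a ∨ IsUnit b

/-- `r` is B-irreducible: `(r)` is maximal among proper principal ideals. -/
def Birr {R : Type*} [CommRing R] (r : R) : Prop :=
  Ideal.span ({r} : Set R) ≠ ⊤ ∧
    ∀ s : R, Ideal.span ({r} : Set R) ≤ Ideal.span ({s} : Set R) →
      Ideal.span ({s} : Set R) = ⊤ ∨ Ideal.span ({s} : Set R) = Ideal.span ({r} : Set R)

/-- `r` is F-irreducible (Fletcher): `r = a * b` implies `a ∈ (r)` or `b ∈ (r)`. -/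
def Firr {R : Type*} [CommRing R] (r : R) : Prop :=
  ¬ IsUnit r ∧
    ∀ a b : R, r = a * b → a ∈ Ideal.span ({r} : Set R) ∨ b ∈ Ideal.span ({r} : Set R)

/-!
Every factorization `a i = x * y` of a coordinate lifts to the factorization
`a = update a i x * mulSingle i y` of `a`, and divisibility by `a` projects to divisibility
by `a i`; so `a i` inherits F-irreducibility from `a` as soon as it is not a unit. Lifting
`a j = 1 * a j` instead shows that no second coordinate `a j` can be a non-unit: `a` would
divide `update a j 1`, making `a j` a unit, or `mulSingle j (a j)`, making `a i` a unit.
-/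

theorem firr_iff_dvd {R : Type*} [CommRing R] (r : R) :
    Firr r ↔ ¬IsUnit r ∧ ∀ a b : R, r = a * b → r ∣ a ∨ r ∣ b := by
  simp only [Firr, Ideal.mem_span_singleton]

theorem Pi.update_mul_mulSingle_of_apply_eq {ι : Type*} [DecidableEq ι] {M : ι → Type*}
    [∀ i, MulOneClass (M i)] {a : ∀ i, M i} {j : ι} {x y : M j} (h : a j = x * y) :
    Function.update a j x * Pi.mulSingle j y = a := by
  rw [Pi.mulSingle, ← Function.update_mul, mul_one, ← h, Function.update_eq_self]

namespace Firr

variable {ι : Type*} {A : ι → Type*} [∀ i, CommRing (A i)] {a : ∀ i, A i}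

theorem apply (h : Firr a) {i : ι} (hi : ¬IsUnit (a i)) : Firr (a i) := by
  classical
  rw [firr_iff_dvd] at h ⊢
  refine ⟨hi, fun x y hxy => ?_⟩
  have hdvd := h.2 _ _ (Pi.update_mul_mulSingle_of_apply_eq hxy).symm
  refine hdvd.imp (fun hx => ?_) (fun hy => ?_)
  · simpa using map_dvd (Pi.evalRingHom A i) hx
  · simpa using map_dvd (Pi.evalRingHom A i) hy

theorem isUnit_apply_of_ne (h : Firr a) {i j : ι} (hi : ¬IsUnit (a i)) (hji : j ≠ i) :
    IsUnit (a j) := by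
  classical
  rw [firr_iff_dvd] at h
  have hfac : a = Function.update a j 1 * Pi.mulSingle j (a j) :=
    (Pi.update_mul_mulSingle_of_apply_eq (one_mul (a j)).symm).symm
  rcases h.2 _ _ hfac with hdvd | hdvd
  · exact isUnit_of_dvd_one (by simpa using map_dvd (Pi.evalRingHom A j) hdvd)
  · have hai : a i ∣ 1 := by simpa [hji.symm] using map_dvd (Pi.evalRingHom A i) hdvd
    exact absurd (isUnit_of_dvd_one hai) hi

end Firr

theorem stmt_12_general (n : ℕ) (A : Fin n → Type*) [∀ i, CommRing (A i)]
    (a : ∀ i, A i) (h : Firr a) :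
    ∃ i, Firr (a i) ∧ ∀ j, j ≠ i → IsUnit (a j) := by
  obtain ⟨i, hi⟩ : ∃ i, ¬IsUnit (a i) := by simpa [Pi.isUnit_iff] using h.1
  exact ⟨i, h.apply hi, fun j hj => h.isUnit_apply_of_ne hi hj⟩

theorem stmt_12 (n : ℕ) (A : Fin n → Type*) [∀ i, CommRing (A i)]
    (a : ∀ i, A i) (h0 : a ≠ 0) (hu : ¬ IsUnit a) (h : Firr a) :
    ∃ i, Firr (a i) ∧ ∀ j, j ≠ i → IsUnit (a j) :=
  stmt_12_general n A a h
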